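/- arXiv:1304.5089 — 6 statements merged into one kernel-verified Lean document; each statement's English description precedes it below -/
import Mathlib

section
/- Let S ⊆ ℕ² be a simplicial affine semigroup with extremal generators n₁, n₂ (i.e., the rational cone of S equals the cone generated by n₁ and n₂, and n₁, n₂ ∈ S are linearly independent over ℚ). Suppose that for every a in the set C = L_{ℚ≥0}({n₁,n₂}) ∩ ℕ² with a ∉ S, at least one of a + n₁, a + n₂ does not belong to S. Then for any α, β ∈ S with α + n₁ = β + n₂, the element α − n₂ = β − n₁ belongs to S. -/
def toQ (p : ℤ × ℤ) : ℚ × ℚ := ((p.1 : ℚ), (p.2 : ℚ))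
def toR (p : ℤ × ℤ) : ℝ × ℝ := ((p.1 : ℝ), (p.2 : ℝ))
def isNat (p : ℤ × ℤ) : Prop := 0 ≤ p.1 ∧ 0 ≤ p.2
def inCone (n₁ n₂ a : ℤ × ℤ) : Prop :=
  ∃ q₁ q₂ : ℚ, 0 ≤ q₁ ∧ 0 ≤ q₂ ∧ toQ a = q₁ • toQ n₁ + q₂ • toQ n₂
def onRay (n a : ℤ × ℤ) : Prop := ∃ q : ℚ, 0 ≤ q ∧ toQ a = q • toQ n

/-! Write `α = q₁ n₁ + q₂ n₂` and `β = r₁ n₁ + r₂ n₂` with nonnegative rational coefficients.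
Comparing coefficients in `α + n₁ = β + n₂`, which is legitimate because `n₁, n₂` are independent,
gives `q₂ = r₂ + 1`, so `a := α - n₂ = q₁ n₁ + r₂ n₂` still lies in the cone `C`.
Since `a + n₂ = α` and `a + n₁ = β` both lie in `S`, the hypothesis forces `a ∈ S`. -/

lemma toQ_add (x y : ℤ × ℤ) : toQ (x + y) = toQ x + toQ y := by
  simp [toQ]

lemma toQ_sub (x y : ℤ × ℤ) : toQ (x - y) = toQ x - toQ y := by
  simp [toQ]

lemma isNat_of_inCone {n₁ n₂ a : ℤ × ℤ} (h₁ : isNat n₁) (h₂ : isNat n₂)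
    (ha : inCone n₁ n₂ a) : isNat a := by
  obtain ⟨q₁, q₂, hq₁, hq₂, hq⟩ := ha
  have hfst : (a.1 : ℚ) = q₁ * n₁.1 + q₂ * n₂.1 := by
    simpa [toQ] using congrArg Prod.fst hq
  have hsnd : (a.2 : ℚ) = q₁ * n₁.2 + q₂ * n₂.2 := by
    simpa [toQ] using congrArg Prod.snd hq
  have h₁ : ((0 : ℚ) ≤ n₁.1) ∧ ((0 : ℚ) ≤ n₁.2) := by exact_mod_cast h₁
  have h₂ : ((0 : ℚ) ≤ n₂.1) ∧ ((0 : ℚ) ≤ n₂.2) := by exact_mod_cast h₂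
  constructor
  · have : (0 : ℚ) ≤ a.1 := hfst ▸ add_nonneg (mul_nonneg hq₁ h₁.1) (mul_nonneg hq₂ h₂.1)
    exact_mod_cast this
  · have : (0 : ℚ) ≤ a.2 := hsnd ▸ add_nonneg (mul_nonneg hq₁ h₁.2) (mul_nonneg hq₂ h₂.2)
    exact_mod_cast this

lemma inCone_sub_of_add_eq_add {n₁ n₂ α β : ℤ × ℤ}
    (hind : LinearIndependent ℚ ![toQ n₁, toQ n₂])
    (hα : inCone n₁ n₂ α) (hβ : inCone n₁ n₂ β) (hαβ : α + n₁ = β + n₂) :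
    inCone n₁ n₂ (α - n₂) := by
  obtain ⟨q₁, q₂, hq₁, -, hq⟩ := hα
  obtain ⟨r₁, r₂, -, hr₂, hr⟩ := hβ
  have hcoeff : (q₁ + 1) • toQ n₁ + q₂ • toQ n₂ = r₁ • toQ n₁ + (r₂ + 1) • toQ n₂ := by
    have := congrArg toQ hαβ
    rw [toQ_add, toQ_add, hq, hr] at this
    linear_combination (norm := module) this
  have hq₂ : q₂ = r₂ + 1 := (hind.eq_of_pair hcoeff).2
  refine ⟨q₁, r₂, hq₁, hr₂, ?_⟩
  rw [toQ_sub, hq, hq₂]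
  module

/-- One direction of Corollary "C-M": if for every `a` in the cone `C` outside `S`
at least one of `a + n₁`, `a + n₂` is not in `S`, then Rosales' condition holds. -/
theorem stmt0 (S : AddSubmonoid (ℤ × ℤ)) (n₁ n₂ : ℤ × ℤ)
    (hnat : ∀ s ∈ S, isNat s)
    (hind : LinearIndependent ℚ ![toQ n₁, toQ n₂])
    (hn₁ : n₁ ∈ S) (hn₂ : n₂ ∈ S)
    (hcone : ∀ s ∈ S, inCone n₁ n₂ s)
    (hCM : ∀ a : ℤ × ℤ, isNat a → inCone n₁ n₂ a → a ∉ S → (a + n₁ ∉ S ∨ a + n₂ ∉ S)) :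
    ∀ α ∈ S, ∀ β ∈ S, α + n₁ = β + n₂ → (α - n₂ = β - n₁ ∧ α - n₂ ∈ S) := by
  intro α hα β hβ hαβ
  have heq : α - n₂ = β - n₁ := sub_eq_sub_iff_add_eq_add.mpr hαβ
  refine ⟨heq, ?_⟩
  have hconeA := inCone_sub_of_add_eq_add hind (hcone α hα) (hcone β hβ) hαβ
  have hnatA := isNat_of_inCone (hnat n₁ hn₁) (hnat n₂ hn₂) hconeA
  by_contra hA
  rcases hCM _ hnatA hconeA hA with h | h
  · exact h (by rwa [heq, sub_add_cancel])
  · exact h (by rwa [sub_add_cancel])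
end

section
/- Let S ⊆ ℕ² be a simplicial affine semigroup with extremal generators n₁, n₂, cone C = L_{ℚ≥0}({n₁,n₂}) ∩ ℕ², and interior int(C) = C minus the two extremal rays ℚ≥0·n₁ ∩ ℕ² and ℚ≥0·n₂ ∩ ℕ². Define int(S) analogously as S minus its elements on the extremal rays. If int(C) \ int(S) is nonempty and finite, then S does not satisfy the combinatorial Cohen-Macaulay condition: there exists a ∈ C \ S with a + n₁ ∈ S and a + n₂ ∈ S. -/
/-!
Choose `a ∈ int(C) \ int(S)` maximising the linear form `p ↦ p.1 + p.2`, which is positive on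
`n₁` and `n₂`. Since `int(C) + C ⊆ int(C)`, both `a + n₁` and `a + n₂` lie in `int(C)`, and by
maximality they are no longer in `int(C) \ int(S)`; hence they lie in `S`.
-/

theorem Set.Finite.exists_forall_add_notMem {M N : Type*} [AddCommMonoid M] [AddCommMonoid N]
    [PartialOrder N] [IsOrderedCancelAddMonoid N] {D : Set M} (hD : D.Finite)
    (hne : D.Nonempty) (f : M →+ N) : ∃ a ∈ D, ∀ v, 0 < f v → a + v ∉ D := by
  obtain ⟨a, haD, hmax⟩ := hD.exists_maximalFor f D hne
  refine ⟨a, haD, fun v hv hav => ?_⟩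
  have hlt : f a < f (a + v) := by rw [map_add]; exact lt_add_of_pos_right _ hv
  exact (hmax hav hlt.le).not_gt hlt

lemma ne_zero_of_toQ_ne_zero {p : ℤ × ℤ} (h : toQ p ≠ 0) : p ≠ 0 := by
  rintro rfl
  simp [toQ] at h

lemma isNat.add {a b : ℤ × ℤ} (ha : isNat a) (hb : isNat b) : isNat (a + b) :=
  ⟨add_nonneg ha.1 hb.1, add_nonneg ha.2 hb.2⟩

lemma isNat.fst_add_snd_pos {p : ℤ × ℤ} (hp : isNat p) (h0 : p ≠ 0) : 0 < p.1 + p.2 := by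
  obtain ⟨h1, h2⟩ := hp
  have : p.1 ≠ 0 ∨ p.2 ≠ 0 := by
    by_contra! h
    exact h0 (Prod.ext h.1 h.2)
  omega

section Cone

variable {n₁ n₂ : ℤ × ℤ}

lemma inCone_left : inCone n₁ n₂ n₁ := ⟨1, 0, zero_le_one, le_rfl, by simp⟩

lemma inCone_right : inCone n₁ n₂ n₂ := ⟨0, 1, le_rfl, zero_le_one, by simp⟩

lemma onRay_left_iff (hind : LinearIndependent ℚ ![toQ n₁, toQ n₂]) {a : ℤ × ℤ} {q₁ q₂ : ℚ}
    (hq₁ : 0 ≤ q₁) (ha : toQ a = q₁ • toQ n₁ + q₂ • toQ n₂) : onRay n₁ a ↔ q₂ = 0 := by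
  constructor
  · rintro ⟨q, -, h⟩
    exact (hind.eq_of_pair (s' := q) (t' := 0) (by rw [← ha, h, zero_smul, add_zero])).2
  · rintro rfl
    exact ⟨q₁, hq₁, by rw [ha, zero_smul, add_zero]⟩

lemma onRay_right_iff (hind : LinearIndependent ℚ ![toQ n₁, toQ n₂]) {a : ℤ × ℤ} {q₁ q₂ : ℚ}
    (hq₂ : 0 ≤ q₂) (ha : toQ a = q₁ • toQ n₁ + q₂ • toQ n₂) : onRay n₂ a ↔ q₁ = 0 := by
  constructor
  · rintro ⟨q, -, h⟩
    exact (hind.eq_of_pair (s' := 0) (t' := q) (by rw [← ha, h, zero_smul, zero_add])).1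
  · rintro rfl
    exact ⟨q₂, hq₂, by rw [ha, zero_smul, zero_add]⟩

lemma inCone_add_of_not_onRay (hind : LinearIndependent ℚ ![toQ n₁, toQ n₂]) {a b : ℤ × ℤ}
    (ha : inCone n₁ n₂ a) (ha₁ : ¬ onRay n₁ a) (ha₂ : ¬ onRay n₂ a) (hb : inCone n₁ n₂ b) :
    inCone n₁ n₂ (a + b) ∧ ¬ onRay n₁ (a + b) ∧ ¬ onRay n₂ (a + b) := by
  obtain ⟨q₁, q₂, hq₁, hq₂, hqa⟩ := ha
  obtain ⟨r₁, r₂, hr₁, hr₂, hrb⟩ := hb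
  have hab : toQ (a + b) = (q₁ + r₁) • toQ n₁ + (q₂ + r₂) • toQ n₂ := by
    rw [toQ_add, hqa, hrb]; module
  have hq₂ : 0 < q₂ := hq₂.lt_of_ne' fun h => ha₁ ((onRay_left_iff hind hq₁ hqa).2 h)
  have hq₁ : 0 < q₁ := hq₁.lt_of_ne' fun h => ha₂ ((onRay_right_iff hind hq₂.le hqa).2 h)
  refine ⟨⟨_, _, by positivity, by positivity, hab⟩, ?_, ?_⟩
  · rw [onRay_left_iff hind (by positivity) hab]; positivity
  · rw [onRay_right_iff hind (by positivity) hab]; positivity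

end Cone

theorem stmt3_general (S : AddSubmonoid (ℤ × ℤ)) (n₁ n₂ : ℤ × ℤ)
    (hnat : ∀ s ∈ S, isNat s)
    (hind : LinearIndependent ℚ ![toQ n₁, toQ n₂])
    (hn₁ : n₁ ∈ S) (hn₂ : n₂ ∈ S)
    (hfin : ({a : ℤ × ℤ | isNat a ∧ inCone n₁ n₂ a ∧ ¬ onRay n₁ a ∧ ¬ onRay n₂ a} \
             {a : ℤ × ℤ | a ∈ S ∧ ¬ onRay n₁ a ∧ ¬ onRay n₂ a}).Finite)
    (hne : ({a : ℤ × ℤ | isNat a ∧ inCone n₁ n₂ a ∧ ¬ onRay n₁ a ∧ ¬ onRay n₂ a} \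
            {a : ℤ × ℤ | a ∈ S ∧ ¬ onRay n₁ a ∧ ¬ onRay n₂ a}).Nonempty) :
    ∃ a : ℤ × ℤ, isNat a ∧ inCone n₁ n₂ a ∧ a ∉ S ∧ a + n₁ ∈ S ∧ a + n₂ ∈ S := by
  obtain ⟨a, ⟨⟨ha, haC, ha₁, ha₂⟩, haS⟩, hmax⟩ :=
    hfin.exists_forall_add_notMem hne (AddMonoidHom.fst ℤ ℤ + AddMonoidHom.snd ℤ ℤ)
  have hadd_mem {n : ℤ × ℤ} (hn : n ∈ S) (hn0 : toQ n ≠ 0) (hnC : inCone n₁ n₂ n) :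
      a + n ∈ S := by
    by_contra hanS
    refine hmax n ((hnat n hn).fst_add_snd_pos (ne_zero_of_toQ_ne_zero hn0)) ⟨?_, fun h => hanS h.1⟩
    exact ⟨ha.add (hnat n hn), inCone_add_of_not_onRay hind haC ha₁ ha₂ hnC⟩
  exact ⟨a, ha, haC, fun h => haS ⟨h, ha₁, ha₂⟩,
    hadd_mem hn₁ (by simpa using hind.ne_zero 0) inCone_left,
    hadd_mem hn₂ (by simpa using hind.ne_zero 1) inCone_right⟩

/-- Lemma "lemma_no_C-M": if `int(C) \ int(S)` is nonempty and finite then `S` fails the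
combinatorial Cohen-Macaulay condition. -/
theorem stmt3 (S : AddSubmonoid (ℤ × ℤ)) (n₁ n₂ : ℤ × ℤ)
    (hnat : ∀ s ∈ S, isNat s)
    (hind : LinearIndependent ℚ ![toQ n₁, toQ n₂])
    (hn₁ : n₁ ∈ S) (hn₂ : n₂ ∈ S)
    (hcone : ∀ s ∈ S, inCone n₁ n₂ s)
    (hfin : ({a : ℤ × ℤ | isNat a ∧ inCone n₁ n₂ a ∧ ¬ onRay n₁ a ∧ ¬ onRay n₂ a} \
             {a : ℤ × ℤ | a ∈ S ∧ ¬ onRay n₁ a ∧ ¬ onRay n₂ a}).Finite)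
    (hne : ({a : ℤ × ℤ | isNat a ∧ inCone n₁ n₂ a ∧ ¬ onRay n₁ a ∧ ¬ onRay n₂ a} \
            {a : ℤ × ℤ | a ∈ S ∧ ¬ onRay n₁ a ∧ ¬ onRay n₂ a}).Nonempty) :
    ∃ a : ℤ × ℤ, isNat a ∧ inCone n₁ n₂ a ∧ a ∉ S ∧ a + n₁ ∈ S ∧ a + n₂ ∈ S :=
  stmt3_general S n₁ n₂ hnat hind hn₁ hn₂ hfin hne
end

section
/- Let F ⊆ ℕ² be a submonoid with extremal generators n₁, n₂ (ℚ-linearly independent, every element of F a nonnegative rational combination of them), C = L_{ℚ≥0}({n₁,n₂}) ∩ ℕ², τᵢ the ray through nᵢ. If int(C) = int(F) (interiors obtained by removing points on τ₁ ∪ τ₂) and F ∩ τᵢ = {k nᵢ : k ∈ ℕ} for i = 1, 2, then F satisfies the Cohen-Macaulay condition: for every a ∈ C \ F, a + n₁ ∉ F or a + n₂ ∉ F. -/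
/-! On a ray `τ` with `F ∩ τ = ℕ n`, the only way `a + n` can lie in `F` is `a + n = k • n`;
then `a = (k - 1) • n ∈ F`, unless `k = 0`, where `a = -n` lies on the ray only if `n = 0`.
Off the two rays, `C` and `F` agree, so every `a ∈ C \ F` lies on one of them. -/

lemma toQ_add_s5 (p q : ℤ × ℤ) : toQ (p + q) = toQ p + toQ q := by
  simp [toQ]

lemma toQ_neg (p : ℤ × ℤ) : toQ (-p) = -toQ p := by
  simp [toQ]

lemma toQ_eq_zero {p : ℤ × ℤ} : toQ p = 0 ↔ p = 0 := by
  simp [toQ, Prod.ext_iff]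

lemma eq_zero_of_onRay_neg {n : ℤ × ℤ} (h : onRay n (-n)) : n = 0 := by
  obtain ⟨q, hq, hqn⟩ := h
  have : (q + 1) • toQ n = 0 := by
    rw [add_smul, one_smul, ← hqn, toQ_neg, neg_add_cancel]
  exact toQ_eq_zero.1 ((smul_eq_zero.1 this).resolve_left (by positivity))

lemma onRay_add_self {n a : ℤ × ℤ} (h : onRay n a) : onRay n (a + n) := by
  obtain ⟨q, hq, hqa⟩ := h
  exact ⟨q + 1, by positivity, by rw [toQ_add_s5, hqa, add_smul, one_smul]⟩

lemma add_notMem_of_onRay_of_notMem (F : AddSubmonoid (ℤ × ℤ)) {n a : ℤ × ℤ}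
    (hF : ∀ b : ℤ × ℤ, (b ∈ F ∧ onRay n b) ↔ ∃ k : ℕ, b = k • n)
    (ha : onRay n a) (haF : a ∉ F) : a + n ∉ F := by
  intro hanF
  obtain ⟨k, hk⟩ := (hF (a + n)).1 ⟨hanF, onRay_add_self ha⟩
  cases k with
  | zero =>
    have ha_neg : a = -n := eq_neg_of_add_eq_zero_left (by simpa using hk)
    subst ha_neg
    exact haF (by simp [eq_zero_of_onRay_neg ha])
  | succ m =>
    have ha_eq : a = m • n := add_right_cancel (by rw [hk, succ_nsmul])
    have hnF : n ∈ F := ((hF n).2 ⟨1, (one_nsmul n).symm⟩).1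
    exact haF (ha_eq ▸ F.nsmul_mem hnF m)

theorem stmt5_general (F : AddSubmonoid (ℤ × ℤ)) (n₁ n₂ : ℤ × ℤ)
    (hint : ∀ a : ℤ × ℤ,
      (isNat a ∧ inCone n₁ n₂ a ∧ ¬ onRay n₁ a ∧ ¬ onRay n₂ a) ↔
      (a ∈ F ∧ ¬ onRay n₁ a ∧ ¬ onRay n₂ a))
    (hτ₁ : ∀ a : ℤ × ℤ, (a ∈ F ∧ onRay n₁ a) ↔ ∃ k : ℕ, a = k • n₁)
    (hτ₂ : ∀ a : ℤ × ℤ, (a ∈ F ∧ onRay n₂ a) ↔ ∃ k : ℕ, a = k • n₂) :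
    ∀ a : ℤ × ℤ, isNat a → inCone n₁ n₂ a → a ∉ F → (a + n₁ ∉ F ∨ a + n₂ ∉ F) := by
  intro a hnatA hconeA haF
  by_cases hr₁ : onRay n₁ a
  · exact .inl (add_notMem_of_onRay_of_notMem F hτ₁ hr₁ haF)
  by_cases hr₂ : onRay n₂ a
  · exact .inr (add_notMem_of_onRay_of_notMem F hτ₂ hr₂ haF)
  exact absurd ((hint a).1 ⟨hnatA, hconeA, hr₁, hr₂⟩).1 haF

/-- Converse direction of Lemma "lema_igual_interior_C-M": if `int(C) = int(F)` and
`F ∩ τᵢ = ⟨nᵢ⟩` for `i = 1, 2`, then `F` satisfies the C-M condition. -/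
theorem stmt5 (F : AddSubmonoid (ℤ × ℤ)) (n₁ n₂ : ℤ × ℤ)
    (hnat : ∀ s ∈ F, isNat s)
    (hind : LinearIndependent ℚ ![toQ n₁, toQ n₂])
    (hn₁ : n₁ ∈ F) (hn₂ : n₂ ∈ F)
    (hcone : ∀ s ∈ F, inCone n₁ n₂ s)
    (hint : ∀ a : ℤ × ℤ,
      (isNat a ∧ inCone n₁ n₂ a ∧ ¬ onRay n₁ a ∧ ¬ onRay n₂ a) ↔
      (a ∈ F ∧ ¬ onRay n₁ a ∧ ¬ onRay n₂ a))
    (hτ₁ : ∀ a : ℤ × ℤ, (a ∈ F ∧ onRay n₁ a) ↔ ∃ k : ℕ, a = k • n₁)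
    (hτ₂ : ∀ a : ℤ × ℤ, (a ∈ F ∧ onRay n₂ a) ↔ ∃ k : ℕ, a = k • n₂) :
    ∀ a : ℤ × ℤ, isNat a → inCone n₁ n₂ a → a ∉ F → (a + n₁ ∉ F ∨ a + n₂ ∉ F) :=
  stmt5_general F n₁ n₂ hint hτ₁ hτ₂
end

section
/- Let F ⊆ ℝ²≥0 be a compact convex set and define the convex body semigroup 𝔉 = ⋃_{i∈ℕ} (i·F) ∩ ℕ². Then 𝔉 is a submonoid of (ℕ², +). -/
open scoped Pointwise

/-- The convex body semigroup `𝔉 = ⋃_{i∈ℕ} (i·F) ∩ ℕ²` of a compact convex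
`F ⊆ ℝ²≥0` (with `0·F = {0}`), viewed inside `ℤ × ℤ`. -/
def cbs (F : Set (ℝ × ℝ)) : Set (ℤ × ℤ) :=
  {a : ℤ × ℤ | a = 0 ∨ ∃ i : ℕ, toR a ∈ (i : ℝ) • F}

lemma toR_add (a b : ℤ × ℤ) : toR (a + b) = toR a + toR b := by
  ext <;> simp [toR]

lemma isNat_iff_zero_le_toR {a : ℤ × ℤ} : isNat a ↔ 0 ≤ toR a := by
  simp [isNat, toR, Prod.le_def]

lemma isNat_of_mem_cbs {F : Set (ℝ × ℝ)} (hquad : ∀ p ∈ F, 0 ≤ p.1 ∧ 0 ≤ p.2) {a : ℤ × ℤ}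
    (ha : a ∈ cbs F) : isNat a := by
  rcases ha with rfl | ⟨i, p, hp, hpa⟩
  · exact ⟨le_rfl, le_rfl⟩
  · rw [isNat_iff_zero_le_toR, ← hpa]
    exact smul_nonneg i.cast_nonneg (Prod.le_def.2 (hquad p hp))

lemma add_mem_cbs {F : Set (ℝ × ℝ)} (hconv : Convex ℝ F) {a b : ℤ × ℤ}
    (ha : a ∈ cbs F) (hb : b ∈ cbs F) : a + b ∈ cbs F := by
  rcases ha with rfl | ⟨i, ha⟩
  · rwa [zero_add]
  rcases hb with rfl | ⟨j, hb⟩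
  · rw [add_zero]; exact Or.inr ⟨i, ha⟩
  refine Or.inr ⟨i + j, ?_⟩
  rw [toR_add, Nat.cast_add, hconv.add_smul i.cast_nonneg j.cast_nonneg]
  exact Set.add_mem_add ha hb

theorem stmt8_general (F : Set (ℝ × ℝ)) (hconv : Convex ℝ F)
    (hquad : ∀ p ∈ F, 0 ≤ p.1 ∧ 0 ≤ p.2) :
    (0 : ℤ × ℤ) ∈ cbs F ∧
    (∀ a ∈ cbs F, isNat a) ∧
    (∀ a ∈ cbs F, ∀ b ∈ cbs F, a + b ∈ cbs F) :=
  ⟨Or.inl rfl, fun _ ha => isNat_of_mem_cbs hquad ha, fun _ ha _ hb => add_mem_cbs hconv ha hb⟩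

/-- The convex body semigroup is a submonoid of `(ℕ², +)`. -/
theorem stmt8 (F : Set (ℝ × ℝ)) (hcomp : IsCompact F) (hconv : Convex ℝ F)
    (hquad : ∀ p ∈ F, 0 ≤ p.1 ∧ 0 ≤ p.2) :
    (0 : ℤ × ℤ) ∈ cbs F ∧
    (∀ a ∈ cbs F, isNat a) ∧
    (∀ a ∈ cbs F, ∀ b ∈ cbs F, a + b ∈ cbs F) :=
  stmt8_general F hconv hquad
end

section
/- Let F ⊆ ℕ² be a submonoid with extremal generators n₁, n₂, satisfying int(C) = int(F), F ∩ τᵢ = {k nᵢ : k ∈ ℕ} for i = 1, 2, and the Cohen-Macaulay condition. Let H = (ConvexHull({0, n₁, n₂, n₁+n₂}) \ (segment[0,n₁] ∪ segment[0,n₂] ∪ {n₁+n₂})) ∪ {0}, intersected with ℕ². Then F is 'Gorenstein' in the combinatorial sense—i.e., Ap(n₁) ∩ Ap(n₂) has a unique maximal element with respect to the order a ≤_F b iff b − a ∈ F—if and only if F ∩ H has a unique maximal element with respect to ≤_F. -/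
def HSet (n₁ n₂ : ℤ × ℤ) : Set (ℤ × ℤ) :=
  {a : ℤ × ℤ | isNat a ∧
    toR a ∈ convexHull ℝ {0, toR n₁, toR n₂, toR n₁ + toR n₂} ∧
    toR a ∉ segment ℝ 0 (toR n₁) ∪ segment ℝ 0 (toR n₂) ∪ {toR n₁ + toR n₂}} ∪ {0}

/-- `m` is a maximal element of `X` with respect to the order `a ≤_F b ↔ b - a ∈ F`. -/
def IsMaxIn (F : AddSubmonoid (ℤ × ℤ)) (X : Set (ℤ × ℤ)) (m : ℤ × ℤ) : Prop :=
  m ∈ X ∧ ∀ x ∈ X, x - m ∈ F → x = m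

open Set Pointwise in
lemma mem_convexHull_parallelogram_iff {𝕜 V : Type*} [Field 𝕜] [LinearOrder 𝕜]
    [IsStrictOrderedRing 𝕜] [AddCommGroup V] [Module 𝕜 V] (N₁ N₂ x : V) :
    x ∈ convexHull 𝕜 {0, N₁, N₂, N₁ + N₂} ↔
      ∃ α ∈ Icc (0 : 𝕜) 1, ∃ β ∈ Icc (0 : 𝕜) 1, α • N₁ + β • N₂ = x := by
  have : ({0, N₁, N₂, N₁ + N₂} : Set V) = {0, N₁} + {0, N₂} := by
    simp only [insert_eq, union_add, add_union, singleton_add_singleton, zero_add, add_zero]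
    ac_rfl
  rw [this, convexHull_add, convexHull_pair, convexHull_pair, segment_eq_image, segment_eq_image]
  simp [Set.mem_add]

namespace PlaneSemigroup

open Set

def castPair (K : Type*) [IntCast K] (a : ℤ × ℤ) : K × K := (a.1, a.2)

lemma castPair_injective (K : Type*) [AddGroupWithOne K] [CharZero K] :
    Function.Injective (castPair K) := by
  intro a b h
  simp only [castPair, Prod.mk.injEq, Int.cast_inj] at h
  exact Prod.ext h.1 h.2

lemma toQ_eq_castPair : toQ = castPair ℚ := rfl

lemma toR_eq_castPair : toR = castPair ℝ := rfl

def det (n₁ n₂ : ℤ × ℤ) : ℤ := n₁.1 * n₂.2 - n₁.2 * n₂.1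

lemma det_swap (n₁ n₂ : ℤ × ℤ) : det n₂ n₁ = -det n₁ n₂ := by
  unfold det; ring

/-- The coefficient of `n₁` in `a`, in the basis `(n₁, n₂)` (Cramer's rule); the coefficient of
`n₂` is `coord n₂ n₁ a`. -/
def coord (n₁ n₂ : ℤ × ℤ) : ℤ × ℤ →+ ℚ where
  toFun a := (a.1 * n₂.2 - a.2 * n₂.1 : ℤ) / (det n₁ n₂ : ℚ)
  map_zero' := by simp
  map_add' a b := by simp only [Prod.fst_add, Prod.snd_add]; push_cast; ring

variable {K : Type*} [Field K] [CharZero K] {n₁ n₂ : ℤ × ℤ}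

lemma coord_apply_cast (a : ℤ × ℤ) :
    (coord n₁ n₂ a : K) = ((a.1 * n₂.2 - a.2 * n₂.1 : ℤ) : K) / (det n₁ n₂ : K) := by
  simp [coord]

lemma castPair_eq_coord_smul_add (hd : det n₁ n₂ ≠ 0) (a : ℤ × ℤ) :
    castPair K a = (coord n₁ n₂ a : K) • castPair K n₁ + (coord n₂ n₁ a : K) • castPair K n₂ := by
  have hd' : (det n₁ n₂ : K) ≠ 0 := Int.cast_ne_zero.2 hd
  rw [coord_apply_cast, coord_apply_cast, det_swap n₁ n₂, Int.cast_neg]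
  ext <;> simp only [castPair, Prod.smul_fst, Prod.smul_snd, Prod.fst_add, Prod.snd_add,
    smul_eq_mul] <;> field_simp <;> simp only [det] <;> push_cast <;> ring

lemma coord_eq_of_castPair_eq (hd : det n₁ n₂ ≠ 0) {a : ℤ × ℤ} {α β : K}
    (h : castPair K a = α • castPair K n₁ + β • castPair K n₂) :
    α = coord n₁ n₂ a ∧ β = coord n₂ n₁ a := by
  have hd' : (det n₁ n₂ : K) ≠ 0 := Int.cast_ne_zero.2 hd
  have hd'' : (det n₂ n₁ : K) ≠ 0 := by rw [det_swap]; push_cast; exact neg_ne_zero.2 hd'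
  simp only [castPair, Prod.ext_iff, Prod.smul_fst, Prod.smul_snd, Prod.fst_add, Prod.snd_add,
    smul_eq_mul] at h
  rw [coord_apply_cast, coord_apply_cast, eq_div_iff hd', eq_div_iff hd'']
  simp only [det]
  push_cast
  constructor
  · linear_combination (-(n₂.2 : K)) * h.1 + (n₂.1 : K) * h.2
  · linear_combination (-(n₁.2 : K)) * h.1 + (n₁.1 : K) * h.2

lemma castPair_eq_smul_add_smul_iff (hd : det n₁ n₂ ≠ 0) {a : ℤ × ℤ} {α β : K} :
    castPair K a = α • castPair K n₁ + β • castPair K n₂ ↔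
      α = coord n₁ n₂ a ∧ β = coord n₂ n₁ a :=
  ⟨coord_eq_of_castPair_eq hd, by rintro ⟨rfl, rfl⟩; exact castPair_eq_coord_smul_add hd a⟩

lemma eq_of_coord_eq (hd : det n₁ n₂ ≠ 0) {a b : ℤ × ℤ} (h₁ : coord n₁ n₂ a = coord n₁ n₂ b)
    (h₂ : coord n₂ n₁ a = coord n₂ n₁ b) : a = b := by
  apply castPair_injective ℚ
  rw [castPair_eq_coord_smul_add hd a, castPair_eq_coord_smul_add hd b, h₁, h₂]

lemma coord_left (hd : det n₁ n₂ ≠ 0) : coord n₁ n₂ n₁ = 1 :=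
  div_self (Int.cast_ne_zero.2 hd)

lemma coord_right : coord n₁ n₂ n₂ = 0 := by
  simp [coord, mul_comm]

lemma det_ne_zero_of_linearIndependent (h : LinearIndependent ℚ ![toQ n₁, toQ n₂]) :
    det n₁ n₂ ≠ 0 := by
  -- if `det = 0`, the relations `n₂.2 • n₁ = n₁.2 • n₂` and `n₂.1 • n₁ = n₁.1 • n₂` force `n₁ = 0`
  intro hd
  have hd' : (n₁.1 : ℚ) * n₂.2 - n₁.2 * n₂.1 = 0 := by exact_mod_cast hd
  have hpair := LinearIndependent.pair_iff.1 h
  have h₁ := hpair n₂.2 (-n₁.2) (by ext <;> simp [toQ] <;> linarith)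
  have h₂ := hpair n₂.1 (-n₁.1) (by ext <;> simp [toQ] <;> linarith)
  exact h.ne_zero 0 (by simp_all [toQ])

lemma inCone_iff (hd : det n₁ n₂ ≠ 0) (a : ℤ × ℤ) :
    inCone n₁ n₂ a ↔ 0 ≤ coord n₁ n₂ a ∧ 0 ≤ coord n₂ n₁ a := by
  constructor
  · rintro ⟨q₁, q₂, h₁, h₂, h⟩
    obtain ⟨rfl, rfl⟩ := (castPair_eq_smul_add_smul_iff hd).1 h
    simp_all
  · rintro ⟨h₁, h₂⟩
    refine ⟨_, _, h₁, h₂, ?_⟩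
    simpa [toQ_eq_castPair] using castPair_eq_coord_smul_add (K := ℚ) hd a

lemma onRay_iff (hd : det n₁ n₂ ≠ 0) (a : ℤ × ℤ) :
    onRay n₁ a ↔ 0 ≤ coord n₁ n₂ a ∧ coord n₂ n₁ a = 0 := by
  have key : ∀ q : ℚ, toQ a = q • toQ n₁ ↔ q = coord n₁ n₂ a ∧ 0 = coord n₂ n₁ a := fun q ↦ by
    rw [toQ_eq_castPair]
    simpa using castPair_eq_smul_add_smul_iff (K := ℚ) hd (a := a) (α := q) (β := 0)
  simp only [onRay, key]
  constructor
  · rintro ⟨q, hq, rfl, h⟩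
    exact ⟨hq, h.symm⟩
  · rintro ⟨h₁, h₂⟩
    exact ⟨_, h₁, rfl, h₂.symm⟩

lemma isNat_of_coord_nonneg (hd : det n₁ n₂ ≠ 0) (hn₁ : isNat n₁) (hn₂ : isNat n₂)
    {a : ℤ × ℤ} (h₁ : 0 ≤ coord n₁ n₂ a) (h₂ : 0 ≤ coord n₂ n₁ a) : isNat a := by
  have h := castPair_eq_coord_smul_add (K := ℚ) hd a
  simp only [castPair, Prod.ext_iff, Prod.smul_fst, Prod.smul_snd, Prod.fst_add, Prod.snd_add,
    smul_eq_mul, Rat.cast_id] at h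
  have : (0 : ℚ) ≤ a.1 ∧ (0 : ℚ) ≤ a.2 := by
    rw [h.1, h.2]
    obtain ⟨hn₁₁, hn₁₂⟩ := hn₁
    obtain ⟨hn₂₁, hn₂₂⟩ := hn₂
    constructor <;> positivity
  exact ⟨by exact_mod_cast this.1, by exact_mod_cast this.2⟩

lemma eq_zero_iff_coord (hd : det n₁ n₂ ≠ 0) (a : ℤ × ℤ) :
    a = 0 ↔ coord n₁ n₂ a = 0 ∧ coord n₂ n₁ a = 0 := by
  refine ⟨by rintro rfl; simp, fun h ↦ eq_of_coord_eq hd ?_ ?_⟩ <;> simp [h]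

/-- The image of `F` under `a ↦ (coord n₁ n₂ a, coord n₂ n₁ a)`, see `mem_iff_inModelMonoid`. -/
def InModelMonoid (x y : ℚ) : Prop :=
  (0 < x ∧ 0 < y) ∨ (y = 0 ∧ ∃ k : ℕ, x = k) ∨ (x = 0 ∧ ∃ k : ℕ, y = k)

lemma InModelMonoid.nonneg {x y : ℚ} (h : InModelMonoid x y) : 0 ≤ x ∧ 0 ≤ y := by
  rcases h with ⟨hx, hy⟩ | ⟨rfl, k, rfl⟩ | ⟨rfl, k, rfl⟩
  · exact ⟨hx.le, hy.le⟩
  · exact ⟨k.cast_nonneg, le_rfl⟩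
  · exact ⟨le_rfl, k.cast_nonneg⟩

lemma inModelMonoid_apery_iff {x y : ℚ} :
    InModelMonoid x y ∧ ¬ InModelMonoid (x - 1) y ∧ ¬ InModelMonoid x (y - 1) ↔
      (x = 0 ∧ y = 0) ∨ (0 < x ∧ x ≤ 1 ∧ 0 < y ∧ y ≤ 1 ∧ ¬ (x = 1 ∧ y = 1)) := by
  have one_of_pos_le_one : ∀ k : ℕ, (0 : ℚ) < k → (k : ℚ) ≤ 1 → (k : ℚ) = 1 := fun k h₀ h₁ ↦ by
    have : 0 < k := by exact_mod_cast h₀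
    have : k ≤ 1 := by exact_mod_cast h₁
    norm_cast; omega
  constructor
  · rintro ⟨⟨hx, hy⟩ | ⟨rfl, k, rfl⟩ | ⟨rfl, k, rfl⟩, h₁, h₂⟩
    · refine Or.inr ⟨hx, ?_, hy, ?_, ?_⟩
      · by_contra! h; exact h₁ (Or.inl ⟨by linarith, hy⟩)
      · by_contra! h; exact h₂ (Or.inl ⟨hx, by linarith⟩)
      · rintro ⟨rfl, rfl⟩; exact h₁ (Or.inr (Or.inr ⟨by norm_num, 1, by norm_num⟩))
    · cases k with
      | zero => exact Or.inl ⟨by simp, rfl⟩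
      | succ k => exact absurd (Or.inr (Or.inl ⟨rfl, k, by push_cast; ring⟩)) h₁
    · cases k with
      | zero => exact Or.inl ⟨rfl, by simp⟩
      | succ k => exact absurd (Or.inr (Or.inr ⟨rfl, k, by push_cast; ring⟩)) h₂
  · rintro (⟨rfl, rfl⟩ | ⟨hx₀, hx₁, hy₀, hy₁, hne⟩)
    · exact ⟨Or.inr (Or.inl ⟨rfl, 0, by simp⟩), fun h ↦ by linarith [h.nonneg.1],
        fun h ↦ by linarith [h.nonneg.2]⟩
    · refine ⟨Or.inl ⟨hx₀, hy₀⟩, ?_, ?_⟩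
      · rintro (⟨h, -⟩ | ⟨h, -⟩ | ⟨h, k, rfl⟩)
        · linarith
        · linarith
        · exact hne ⟨by linarith, one_of_pos_le_one k hy₀ hy₁⟩
      · rintro (⟨-, h⟩ | ⟨h, k, rfl⟩ | ⟨h, -⟩)
        · linarith
        · exact hne ⟨one_of_pos_le_one k hx₀ hx₁, by linarith⟩
        · linarith

section Monoid

variable {F : AddSubmonoid (ℤ × ℤ)}

lemma mem_iff_of_coord_eq_zero (hd : det n₁ n₂ ≠ 0)
    (hτ : ∀ a : ℤ × ℤ, (a ∈ F ∧ onRay n₁ a) ↔ ∃ k : ℕ, a = k • n₁) {a : ℤ × ℤ}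
    (h₁ : 0 ≤ coord n₁ n₂ a) (h₂ : coord n₂ n₁ a = 0) :
    a ∈ F ↔ ∃ k : ℕ, coord n₁ n₂ a = k := by
  have hray : onRay n₁ a := (onRay_iff hd a).2 ⟨h₁, h₂⟩
  constructor
  · intro ha
    obtain ⟨k, rfl⟩ := (hτ a).1 ⟨ha, hray⟩
    exact ⟨k, by rw [map_nsmul, coord_left hd, nsmul_one]⟩
  · rintro ⟨k, hk⟩
    refine ((hτ a).2 ⟨k, eq_of_coord_eq hd ?_ ?_⟩).1
    · rw [hk, map_nsmul, coord_left hd, nsmul_one]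
    · rw [h₂, map_nsmul, coord_right, smul_zero]

lemma mem_of_coord_pos (hd : det n₁ n₂ ≠ 0) (hn₁ : isNat n₁) (hn₂ : isNat n₂)
    (hint : ∀ a : ℤ × ℤ, isNat a → inCone n₁ n₂ a → ¬ onRay n₁ a → ¬ onRay n₂ a → a ∈ F)
    {a : ℤ × ℤ} (h₁ : 0 < coord n₁ n₂ a) (h₂ : 0 < coord n₂ n₁ a) : a ∈ F := by
  have hd' : det n₂ n₁ ≠ 0 := by rwa [det_swap, neg_ne_zero]
  exact hint a (isNat_of_coord_nonneg hd hn₁ hn₂ h₁.le h₂.le) ((inCone_iff hd a).2 ⟨h₁.le, h₂.le⟩)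
    (fun h ↦ h₂.ne' ((onRay_iff hd a).1 h).2) (fun h ↦ h₁.ne' ((onRay_iff hd' a).1 h).2)

lemma mem_iff_inModelMonoid (hd : det n₁ n₂ ≠ 0) (hn₁ : isNat n₁) (hn₂ : isNat n₂)
    (hcone : ∀ s ∈ F, inCone n₁ n₂ s)
    (hint : ∀ a : ℤ × ℤ, isNat a → inCone n₁ n₂ a → ¬ onRay n₁ a → ¬ onRay n₂ a → a ∈ F)
    (hτ₁ : ∀ a : ℤ × ℤ, (a ∈ F ∧ onRay n₁ a) ↔ ∃ k : ℕ, a = k • n₁)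
    (hτ₂ : ∀ a : ℤ × ℤ, (a ∈ F ∧ onRay n₂ a) ↔ ∃ k : ℕ, a = k • n₂) (a : ℤ × ℤ) :
    a ∈ F ↔ InModelMonoid (coord n₁ n₂ a) (coord n₂ n₁ a) := by
  have hd' : det n₂ n₁ ≠ 0 := by rwa [det_swap, neg_ne_zero]
  constructor
  · intro ha
    obtain ⟨h₁, h₂⟩ := (inCone_iff hd a).1 (hcone a ha)
    rcases h₂.eq_or_lt with h₂ | h₂
    · exact Or.inr (Or.inl ⟨h₂.symm, (mem_iff_of_coord_eq_zero hd hτ₁ h₁ h₂.symm).1 ha⟩)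
    rcases h₁.eq_or_lt with h₁ | h₁
    · exact Or.inr (Or.inr ⟨h₁.symm, (mem_iff_of_coord_eq_zero hd' hτ₂ h₂.le h₁.symm).1 ha⟩)
    exact Or.inl ⟨h₁, h₂⟩
  · rintro (⟨h₁, h₂⟩ | ⟨h₂, k, hk⟩ | ⟨h₁, k, hk⟩)
    · exact mem_of_coord_pos hd hn₁ hn₂ hint h₁ h₂
    · exact (mem_iff_of_coord_eq_zero hd hτ₁ (hk ▸ k.cast_nonneg) h₂).2 ⟨k, hk⟩
    · exact (mem_iff_of_coord_eq_zero hd' hτ₂ (hk ▸ k.cast_nonneg) h₁).2 ⟨k, hk⟩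

end Monoid

lemma toR_mem_convexHull_iff (hd : det n₁ n₂ ≠ 0) (a : ℤ × ℤ) :
    toR a ∈ convexHull ℝ {0, toR n₁, toR n₂, toR n₁ + toR n₂} ↔
      coord n₁ n₂ a ∈ Icc 0 1 ∧ coord n₂ n₁ a ∈ Icc 0 1 := by
  simp only [mem_convexHull_parallelogram_iff, toR_eq_castPair, eq_comm (b := castPair ℝ a),
    castPair_eq_smul_add_smul_iff hd]
  simp only [exists_eq_right_right, mem_Icc]
  norm_cast

lemma toR_mem_segment_iff (hd : det n₁ n₂ ≠ 0) (a : ℤ × ℤ) :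
    toR a ∈ segment ℝ 0 (toR n₁) ↔ coord n₁ n₂ a ∈ Icc 0 1 ∧ coord n₂ n₁ a = 0 := by
  have key (θ : ℝ) : θ • toR n₁ = toR a ↔ coord n₂ n₁ a = 0 ∧ θ = coord n₁ n₂ a := by
    have h := castPair_eq_smul_add_smul_iff (K := ℝ) hd (a := a) (α := θ) (β := 0)
    rw [zero_smul, add_zero, eq_comm, eq_comm (a := (0 : ℝ)), Rat.cast_eq_zero, and_comm] at h
    exact h
  rw [segment_eq_image]
  simp only [smul_zero, zero_add, mem_image, key, exists_eq_right_right, mem_Icc]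
  norm_cast

lemma toR_eq_add_iff (hd : det n₁ n₂ ≠ 0) (a : ℤ × ℤ) :
    toR a = toR n₁ + toR n₂ ↔ coord n₁ n₂ a = 1 ∧ coord n₂ n₁ a = 1 := by
  rw [toR_eq_castPair, ← one_smul ℝ (castPair ℝ n₁), ← one_smul ℝ (castPair ℝ n₂),
    castPair_eq_smul_add_smul_iff hd]
  norm_cast
  rw [eq_comm, eq_comm (a := (1 : ℚ))]

lemma mem_HSet_iff (hd : det n₁ n₂ ≠ 0) (hn₁ : isNat n₁) (hn₂ : isNat n₂) (a : ℤ × ℤ) :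
    a ∈ HSet n₁ n₂ ↔ (coord n₁ n₂ a = 0 ∧ coord n₂ n₁ a = 0) ∨
      (0 < coord n₁ n₂ a ∧ coord n₁ n₂ a ≤ 1 ∧ 0 < coord n₂ n₁ a ∧ coord n₂ n₁ a ≤ 1 ∧
        ¬ (coord n₁ n₂ a = 1 ∧ coord n₂ n₁ a = 1)) := by
  have hd' : det n₂ n₁ ≠ 0 := by rwa [det_swap, neg_ne_zero]
  simp only [HSet, mem_union, mem_ofPred_eq, mem_singleton_iff, not_or, mem_Icc,
    toR_mem_convexHull_iff hd, toR_mem_segment_iff hd, toR_mem_segment_iff hd',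
    toR_eq_add_iff hd, eq_zero_iff_coord hd a]
  constructor
  · rintro (⟨-, ⟨⟨hx₀, hx₁⟩, hy₀, hy₁⟩, ⟨hy, hx⟩, hne⟩ | h)
    · exact Or.inr ⟨hx₀.lt_of_ne fun h ↦ hx ⟨⟨hy₀, hy₁⟩, h.symm⟩, hx₁,
        hy₀.lt_of_ne fun h ↦ hy ⟨⟨hx₀, hx₁⟩, h.symm⟩, hy₁, hne⟩
    · exact Or.inl h
  · rintro (h | ⟨hx₀, hx₁, hy₀, hy₁, hne⟩)
    · exact Or.inr h
    · exact Or.inl ⟨isNat_of_coord_nonneg hd hn₁ hn₂ hx₀.le hy₀.le,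
        ⟨⟨hx₀.le, hx₁⟩, hy₀.le, hy₁⟩, ⟨fun h ↦ hy₀.ne' h.2, fun h ↦ hx₀.ne' h.2⟩, hne⟩

lemma aperySet_inter_eq {F : AddSubmonoid (ℤ × ℤ)} (hd : det n₁ n₂ ≠ 0) (hn₁ : isNat n₁)
    (hn₂ : isNat n₂) (hcone : ∀ s ∈ F, inCone n₁ n₂ s)
    (hint : ∀ a : ℤ × ℤ, isNat a → inCone n₁ n₂ a → ¬ onRay n₁ a → ¬ onRay n₂ a → a ∈ F)
    (hτ₁ : ∀ a : ℤ × ℤ, (a ∈ F ∧ onRay n₁ a) ↔ ∃ k : ℕ, a = k • n₁)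
    (hτ₂ : ∀ a : ℤ × ℤ, (a ∈ F ∧ onRay n₂ a) ↔ ∃ k : ℕ, a = k • n₂) :
    {s | s ∈ F ∧ s - n₁ ∉ F} ∩ {s | s ∈ F ∧ s - n₂ ∉ F} = {s | s ∈ F} ∩ HSet n₁ n₂ := by
  have hd' : det n₂ n₁ ≠ 0 := by rwa [det_swap, neg_ne_zero]
  have hF := mem_iff_inModelMonoid hd hn₁ hn₂ hcone hint hτ₁ hτ₂
  ext s
  simp only [mem_inter_iff, mem_ofPred_eq, mem_HSet_iff hd hn₁ hn₂, hF, map_sub, coord_left hd,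
    coord_left hd', coord_right, sub_zero]
  constructor
  · rintro ⟨⟨hs, h₁⟩, -, h₂⟩
    exact ⟨hs, inModelMonoid_apery_iff.1 ⟨hs, h₁, h₂⟩⟩
  · rintro ⟨hs, h⟩
    obtain ⟨-, h₁, h₂⟩ := inModelMonoid_apery_iff.2 h
    exact ⟨⟨hs, h₁⟩, hs, h₂⟩

end PlaneSemigroup

theorem stmt9_general (F : AddSubmonoid (ℤ × ℤ)) (n₁ n₂ : ℤ × ℤ)
    (hnat : ∀ s ∈ F, isNat s)
    (hind : LinearIndependent ℚ ![toQ n₁, toQ n₂])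
    (hn₁ : n₁ ∈ F) (hn₂ : n₂ ∈ F)
    (hcone : ∀ s ∈ F, inCone n₁ n₂ s)
    (hint : ∀ a : ℤ × ℤ,
      (isNat a ∧ inCone n₁ n₂ a ∧ ¬ onRay n₁ a ∧ ¬ onRay n₂ a) ↔
      (a ∈ F ∧ ¬ onRay n₁ a ∧ ¬ onRay n₂ a))
    (hτ₁ : ∀ a : ℤ × ℤ, (a ∈ F ∧ onRay n₁ a) ↔ ∃ k : ℕ, a = k • n₁)
    (hτ₂ : ∀ a : ℤ × ℤ, (a ∈ F ∧ onRay n₂ a) ↔ ∃ k : ℕ, a = k • n₂) :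
    (∃! m : ℤ × ℤ, IsMaxIn F
        ({s : ℤ × ℤ | s ∈ F ∧ s - n₁ ∉ F} ∩ {s : ℤ × ℤ | s ∈ F ∧ s - n₂ ∉ F}) m) ↔
    (∃! m : ℤ × ℤ, IsMaxIn F ({s : ℤ × ℤ | s ∈ F} ∩ HSet n₁ n₂) m) := by
  have hint' (a : ℤ × ℤ) (h₁ : isNat a) (h₂ : inCone n₁ n₂ a) (h₃ : ¬ onRay n₁ a)
      (h₄ : ¬ onRay n₂ a) : a ∈ F :=
    ((hint a).1 ⟨h₁, h₂, h₃, h₄⟩).1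
  rw [PlaneSemigroup.aperySet_inter_eq (PlaneSemigroup.det_ne_zero_of_linearIndependent hind)
    (hnat n₁ hn₁) (hnat n₂ hn₂) hcone hint' hτ₁ hτ₂]

/-- Corollary "corollary_igual_interior_Gorenstein": under the hypotheses,
`Ap(n₁) ∩ Ap(n₂)` has a unique maximal element iff `F ∩ H` has a unique maximal element. -/
theorem stmt9 (F : AddSubmonoid (ℤ × ℤ)) (n₁ n₂ : ℤ × ℤ)
    (hnat : ∀ s ∈ F, isNat s)
    (hind : LinearIndependent ℚ ![toQ n₁, toQ n₂])
    (hn₁ : n₁ ∈ F) (hn₂ : n₂ ∈ F)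
    (hcone : ∀ s ∈ F, inCone n₁ n₂ s)
    (hint : ∀ a : ℤ × ℤ,
      (isNat a ∧ inCone n₁ n₂ a ∧ ¬ onRay n₁ a ∧ ¬ onRay n₂ a) ↔
      (a ∈ F ∧ ¬ onRay n₁ a ∧ ¬ onRay n₂ a))
    (hτ₁ : ∀ a : ℤ × ℤ, (a ∈ F ∧ onRay n₁ a) ↔ ∃ k : ℕ, a = k • n₁)
    (hτ₂ : ∀ a : ℤ × ℤ, (a ∈ F ∧ onRay n₂ a) ↔ ∃ k : ℕ, a = k • n₂)
    (hCM : ∀ a : ℤ × ℤ, isNat a → inCone n₁ n₂ a → a ∉ F → (a + n₁ ∉ F ∨ a + n₂ ∉ F)) :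
    (∃! m : ℤ × ℤ, IsMaxIn F
        ({s : ℤ × ℤ | s ∈ F ∧ s - n₁ ∉ F} ∩ {s : ℤ × ℤ | s ∈ F ∧ s - n₂ ∉ F}) m) ↔
    (∃! m : ℤ × ℤ, IsMaxIn F ({s : ℤ × ℤ | s ∈ F} ∩ HSet n₁ n₂) m) :=
  stmt9_general F n₁ n₂ hnat hind hn₁ hn₂ hcone hint hτ₁ hτ₂
end

section
/- Let T ⊆ ℝ²≥0 be the triangle with vertices A = (4,0), B = (4+2k, 0), V = (4+k, k) for an integer k ≥ 2, and let 𝔗 = ⋃_{i∈ℕ} (i·T) ∩ ℕ² be its convex body semigroup. Then n₂ = (4,0) is the element of 𝔗 on the x-axis of smallest norm, and, with n₁ = (4+k, k) the smallest element of 𝔗 on the other extremal ray (the ray through (4+k,k)), the set Ap(n₁) ∩ Ap(n₂) has a unique maximal element (10+k, k−1) with respect to the order induced by 𝔗. -/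
open scoped Pointwise

/-- The triangle with vertices `(4,0)`, `(4+2k,0)`, `(4+k,k)`. -/
def triK (k : ℕ) : Set (ℝ × ℝ) :=
  convexHull ℝ {((4 : ℝ), (0 : ℝ)), ((4 + 2 * (k : ℝ), (0 : ℝ))), ((4 + (k : ℝ), (k : ℝ)))}

/-- Its convex body semigroup `𝔗 = ⋃_{i∈ℕ} (i·T) ∩ ℕ²`, inside `ℤ × ℤ`. -/
def triSemK (k : ℕ) : Set (ℤ × ℤ) :=
  {a : ℤ × ℤ | a = 0 ∨ ∃ i : ℕ, toR a ∈ (i : ℝ) • triK k}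

/-- The Apéry set `Ap(n) = {s ∈ 𝔗 : s - n ∉ 𝔗}`. -/
def apK (k : ℕ) (n : ℤ × ℤ) : Set (ℤ × ℤ) :=
  {s : ℤ × ℤ | s ∈ triSemK k ∧ s - n ∉ triSemK k}


lemma convex_hp (c₁ c₂ c₃ : ℝ) : Convex ℝ {p : ℝ × ℝ | c₁ * p.1 + c₂ * p.2 ≤ c₃} := by
  intro x hx y hy a b ha hb hab
  simp only [Set.mem_setOf_eq] at hx hy ⊢
  have h1 : (a • x + b • y).1 = a * x.1 + b * y.1 := rfl
  have h2 : (a • x + b • y).2 = a * x.2 + b * y.2 := rfl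
  rw [h1, h2]
  have key : c₁ * (a * x.1 + b * y.1) + c₂ * (a * x.2 + b * y.2)
      = a * (c₁ * x.1 + c₂ * x.2) + b * (c₁ * y.1 + c₂ * y.2) := by ring
  rw [key]
  calc a * (c₁ * x.1 + c₂ * x.2) + b * (c₁ * y.1 + c₂ * y.2)
      ≤ a * c₃ + b * c₃ := add_le_add (mul_le_mul_of_nonneg_left hx ha) (mul_le_mul_of_nonneg_left hy hb)
    _ = c₃ := by rw [← add_mul, hab, one_mul]

lemma tri_sub (k : ℕ) (c₁ c₂ c₃ : ℝ) (h1 : c₁ * 4 + c₂ * 0 ≤ c₃)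
    (h2 : c₁ * (4 + 2 * (k:ℝ)) + c₂ * 0 ≤ c₃) (h3 : c₁ * (4 + (k:ℝ)) + c₂ * (k:ℝ) ≤ c₃) :
    triK k ⊆ {p : ℝ × ℝ | c₁ * p.1 + c₂ * p.2 ≤ c₃} := by
  refine convexHull_min ?_ (convex_hp c₁ c₂ c₃)
  intro q hq
  simp only [Set.mem_insert_iff, Set.mem_singleton_iff] at hq
  rcases hq with rfl | rfl | rfl
  · simpa using h1
  · simpa using h2
  · simpa using h3

lemma combo_mem (A B V : ℝ × ℝ) {a b c : ℝ} (ha : 0 ≤ a) (hb : 0 ≤ b) (hc : 0 ≤ c)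
    (habc : a + b + c = 1) : a • A + b • B + c • V ∈ convexHull ℝ {A, B, V} := by
  have hA : A ∈ convexHull ℝ {A, B, V} := subset_convexHull ℝ _ (by simp)
  have hB : B ∈ convexHull ℝ {A, B, V} := subset_convexHull ℝ _ (by simp)
  have hV : V ∈ convexHull ℝ {A, B, V} := subset_convexHull ℝ _ (by simp)
  by_cases hab : a + b = 0
  · have ha0 : a = 0 := by linarith
    have hb0 : b = 0 := by linarith
    have hc1 : c = 1 := by linarith
    simp [ha0, hb0, hc1, hV]
  · have hs : 0 < a + b := lt_of_le_of_ne (by linarith) (Ne.symm hab)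
    have hq : (a/(a+b)) • A + (b/(a+b)) • B ∈ convexHull ℝ {A, B, V} :=
      (convex_convexHull ℝ _) hA hB (div_nonneg ha hs.le) (div_nonneg hb hs.le)
        (by field_simp)
    have := (convex_convexHull ℝ _) hq hV (le_of_lt hs) hc (by linarith)
    have he : (a+b) • ((a/(a+b)) • A + (b/(a+b)) • B) + c • V = a • A + b • B + c • V := by
      rw [smul_add, smul_smul, smul_smul, mul_div_cancel₀ _ hab, mul_div_cancel₀ _ hab]
    rwa [he] at this

lemma mem_char (k : ℕ) (hk : 1 ≤ k) (a : ℤ × ℤ) :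
    a ∈ triSemK k ↔ a = 0 ∨ ∃ i : ℤ, 1 ≤ i ∧ 0 ≤ a.2 ∧ 4*i + a.2 ≤ a.1 ∧
      a.1 + a.2 ≤ (4 + 2*(k:ℤ))*i := by
  have hK : (0:ℝ) < (k:ℝ) := by exact_mod_cast hk
  constructor
  · rintro (rfl | ⟨i, hi⟩)
    · exact Or.inl rfl
    rcases Nat.eq_zero_or_pos i with rfl | hi1
    · left
      have hne : (triK k).Nonempty := ⟨_, subset_convexHull ℝ _ (Set.mem_insert _ _)⟩
      rw [Nat.cast_zero, Set.zero_smul_set hne] at hi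
      simp only [Set.mem_zero] at hi
      have h1 : (a.1 : ℝ) = 0 := congrArg Prod.fst hi
      have h2 : (a.2 : ℝ) = 0 := congrArg Prod.snd hi
      exact Prod.ext (by exact_mod_cast h1) (by exact_mod_cast h2)
    · obtain ⟨p, hp, hpa⟩ := Set.mem_smul_set.mp hi
      have hi0 : (0:ℝ) ≤ (i:ℝ) := by positivity
      have hy0 : 0 ≤ p.2 := by
        have := tri_sub k 0 (-1) 0 (by norm_num) (by norm_num) (by nlinarith) hp
        simp only [Set.mem_setOf_eq] at this; linarith
      have hleft : 4 + p.2 ≤ p.1 := by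
        have := tri_sub k (-1) 1 (-4) (by norm_num) (by nlinarith) (by nlinarith) hp
        simp only [Set.mem_setOf_eq] at this; linarith
      have hright : p.1 + p.2 ≤ 4 + 2*(k:ℝ) := by
        have := tri_sub k 1 1 (4 + 2*(k:ℝ)) (by norm_num) (by nlinarith) (by nlinarith) hp
        simp only [Set.mem_setOf_eq] at this; linarith
      have ha1 : (a.1 : ℝ) = (i:ℝ) * p.1 := (congrArg Prod.fst hpa).symm
      have ha2 : (a.2 : ℝ) = (i:ℝ) * p.2 := (congrArg Prod.snd hpa).symm
      right
      refine ⟨(i:ℤ), by exact_mod_cast hi1, ?_, ?_, ?_⟩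
      · have : (0:ℝ) ≤ (a.2:ℝ) := by rw [ha2]; positivity
        exact_mod_cast this
      · have : (4*(i:ℝ) + (a.2:ℝ)) ≤ (a.1:ℝ) := by
          rw [ha1, ha2]
          nlinarith [mul_le_mul_of_nonneg_left hleft hi0]
        exact_mod_cast this
      · have : (a.1:ℝ) + (a.2:ℝ) ≤ (4 + 2*(k:ℝ)) * (i:ℝ) := by
          rw [ha1, ha2]
          nlinarith [mul_le_mul_of_nonneg_left hright hi0]
        exact_mod_cast this
  · rintro (rfl | ⟨i, hi1, hy, hl, hr⟩)
    · exact Or.inl rfl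
    right
    refine ⟨i.toNat, ?_⟩
    have hn : ((i.toNat : ℕ) : ℝ) = (i : ℝ) := by
      have := Int.toNat_of_nonneg (by linarith : (0:ℤ) ≤ i)
      exact_mod_cast congrArg (Int.cast : ℤ → ℝ) this
    rw [hn]
    have hI : (0:ℝ) < (i:ℝ) := by exact_mod_cast lt_of_lt_of_le one_pos hi1
    have hy' : (0:ℝ) ≤ ((a.2:ℤ):ℝ) := by exact_mod_cast hy
    have hl' : 4*(i:ℝ) + ((a.2:ℤ):ℝ) ≤ ((a.1:ℤ):ℝ) := by exact_mod_cast hl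
    have hr' : ((a.1:ℤ):ℝ) + ((a.2:ℤ):ℝ) ≤ (4 + 2*(k:ℝ))*(i:ℝ) := by exact_mod_cast hr
    set x : ℝ := ((a.1:ℤ) : ℝ)
    set y : ℝ := ((a.2:ℤ) : ℝ)
    set α : ℝ := ((4 + 2*(k:ℝ))*(i:ℝ) - x - y) / (2*(k:ℝ)*(i:ℝ))
    set β : ℝ := (x - 4*(i:ℝ) - y) / (2*(k:ℝ)*(i:ℝ))
    set γ : ℝ := y / ((k:ℝ)*(i:ℝ))
    have hα : 0 ≤ α := div_nonneg (by linarith) (by positivity)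
    have hβ : 0 ≤ β := div_nonneg (by linarith) (by positivity)
    have hγ : 0 ≤ γ := div_nonneg hy' (by positivity)
    have hsum : α + β + γ = 1 := by
      simp only [α, β, γ]
      field_simp
      ring
    have hcomb := combo_mem ((4:ℝ),(0:ℝ)) ((4 + 2*(k:ℝ)), (0:ℝ)) ((4 + (k:ℝ)), (k:ℝ)) hα hβ hγ hsum
    have hkey : α • ((4:ℝ),(0:ℝ)) + β • ((4 + 2*(k:ℝ)), (0:ℝ)) + γ • ((4 + (k:ℝ)), (k:ℝ))
        = (x/(i:ℝ), y/(i:ℝ)) := by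
      have e1 : (α • ((4:ℝ),(0:ℝ)) + β • ((4 + 2*(k:ℝ)), (0:ℝ)) + γ • ((4 + (k:ℝ)), (k:ℝ))).1
          = α * 4 + β * (4 + 2*(k:ℝ)) + γ * (4 + (k:ℝ)) := rfl
      have e2 : (α • ((4:ℝ),(0:ℝ)) + β • ((4 + 2*(k:ℝ)), (0:ℝ)) + γ • ((4 + (k:ℝ)), (k:ℝ))).2
          = α * 0 + β * 0 + γ * (k:ℝ) := rfl
      refine Prod.ext ?_ ?_
      · rw [e1]; simp only [α, β, γ]; field_simp; ring
      · rw [e2]; simp only [γ]; field_simp; ring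
    rw [Set.mem_smul_set]
    refine ⟨(x/(i:ℝ), y/(i:ℝ)), hkey ▸ hcomb, ?_⟩
    refine Prod.ext ?_ ?_
    · show (i:ℝ) * (x/(i:ℝ)) = x
      field_simp
    · show (i:ℝ) * (y/(i:ℝ)) = y
      field_simp

section Rest
variable {k : ℕ}

lemma mem_of (hk : 1 ≤ k) (a : ℤ × ℤ) (i : ℤ) (hi : 1 ≤ i) (h2 : 0 ≤ a.2)
    (h3 : 4*i + a.2 ≤ a.1) (h4 : a.1 + a.2 ≤ (4 + 2*(k:ℤ))*i) : a ∈ triSemK k :=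
  (mem_char k hk a).mpr (Or.inr ⟨i, hi, h2, h3, h4⟩)

lemma fst_sub (a b : ℤ × ℤ) : (a - b).1 = a.1 - b.1 := rfl
lemma snd_sub (a b : ℤ × ℤ) : (a - b).2 = a.2 - b.2 := rfl

lemma M_mem (hk : 2 ≤ k) : ((10 + (k:ℤ), (k:ℤ) - 1)) ∈ triSemK k := by
  have hK : (2:ℤ) ≤ (k:ℤ) := by exact_mod_cast hk
  exact mem_of (by omega) _ 2 (by norm_num) (by simp; linarith) (by simp; linarith)
    (by simp; linarith)

/-- `M - n₁ = (6,-1) ∉ 𝔗`. -/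
lemma M_sub_n1 (hk : 2 ≤ k) :
    ((10 + (k:ℤ), (k:ℤ) - 1)) - ((4 + (k:ℤ), (k:ℤ))) ∉ triSemK k := by
  intro h
  rcases (mem_char k (by omega) _).mp h with h0 | ⟨i, hi, h2, h3, h4⟩
  · rw [sub_eq_zero, Prod.ext_iff] at h0
    simp at h0
  · rw [snd_sub] at h2
    simp at h2

/-- `M - n₂ = (6+k, k-1) ∉ 𝔗`. -/
lemma M_sub_n2 (hk : 2 ≤ k) :
    ((10 + (k:ℤ), (k:ℤ) - 1)) - (((4:ℤ), (0:ℤ))) ∉ triSemK k := by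
  have hK : (2:ℤ) ≤ (k:ℤ) := by exact_mod_cast hk
  intro h
  rcases (mem_char k (by omega) _).mp h with h0 | ⟨i, hi, h2, h3, h4⟩
  · rw [sub_eq_zero, Prod.ext_iff] at h0
    simp at h0
    omega
  · rw [fst_sub, snd_sub] at h4
    rw [fst_sub] at h3
    simp at h3 h4
    have hi1 : i = 1 := by
      have h7 : 4*i ≤ 7 := by linarith
      omega
    subst hi1
    linarith

/-- Key dominance lemma: every element of `Ap(n₁) ∩ Ap(n₂)` is dominated by `M`. -/
lemma dom (hk : 2 ≤ k) (m : ℤ × ℤ) (hm : m ∈ triSemK k)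
    (h1 : m - ((4 + (k:ℤ), (k:ℤ))) ∉ triSemK k)
    (h2 : m - (((4:ℤ), (0:ℤ))) ∉ triSemK k) :
    ((10 + (k:ℤ), (k:ℤ) - 1)) - m ∈ triSemK k := by
  have hK : (2:ℤ) ≤ (k:ℤ) := by exact_mod_cast hk
  rcases (mem_char k (by omega) m).mp hm with rfl | ⟨i, hi, hy, hl, hr⟩
  · rw [sub_zero]; exact M_mem hk
  by_cases hyk : (k:ℤ) ≤ m.2
  · -- then m - n₁ ∈ 𝔗, contradiction with h1
    exfalso
    apply h1
    rcases eq_or_lt_of_le hi with hi1 | hi2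
    · -- i = 1 : m = n₁
      have hi1' : i = 1 := hi1.symm
      subst hi1'
      have hy1 : m.2 = (k:ℤ) := by linarith
      have hx1 : m.1 = 4 + (k:ℤ) := by linarith
      have hm1 : m = ((4 + (k:ℤ), (k:ℤ))) := Prod.ext hx1 hy1
      rw [hm1, sub_self]
      exact (mem_char k (by omega) _).mpr (Or.inl rfl)
    · -- i ≥ 2 : witness i - 1
      have e : (4+2*(k:ℤ))*(i-1) = (4+2*(k:ℤ))*i - (4+2*(k:ℤ)) := by ring
      refine mem_of (by omega) _ (i-1) (by omega) ?_ ?_ ?_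
      · rw [snd_sub]; simp; linarith
      · rw [fst_sub, snd_sub]; simp; linarith
      · rw [fst_sub, snd_sub]; simp; linarith
  · push_neg at hyk
    -- m.2 ≤ k - 1
    have hne : m ≠ ((4:ℤ), (0:ℤ)) := by
      intro hEq
      apply h2; rw [hEq, sub_self]
      exact (mem_char k (by omega) _).mpr (Or.inl rfl)
    have hno : ∀ j : ℤ, 1 ≤ j → 4*j + m.2 ≤ m.1 - 4 → ¬((m.1 - 4) + m.2 ≤ (4+2*(k:ℤ))*j) := by
      intro j hj h3 h4
      apply h2
      refine mem_of (by omega) _ j hj ?_ ?_ ?_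
      · rw [snd_sub]; simpa using hy
      · rw [fst_sub, snd_sub]; simpa using h3
      · rw [fst_sub, snd_sub]; simpa using h4
    have hup : m.1 ≤ 4*i + m.2 + 3 := by
      by_contra hcon
      push_neg at hcon
      exact hno i hi (by linarith) (by linarith)
    rcases eq_or_lt_of_le hi with hi1 | hi2
    · -- i = 1
      have hi1' : i = 1 := hi1.symm
      subst hi1'
      have h5 : 5 ≤ m.1 + m.2 := by
        by_contra hcon
        push_neg at hcon
        have hy0 : m.2 = 0 := by linarith
        have hx4 : m.1 = 4 := by linarith
        exact hne (Prod.ext hx4 hy0)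
      refine mem_of (by omega) _ 1 le_rfl ?_ ?_ ?_
      · rw [snd_sub]; simp; linarith
      · rw [fst_sub, snd_sub]; simp; linarith
      · rw [fst_sub, snd_sub]; simp; linarith
    · -- i ≥ 2
      have hlow : (4+2*(k:ℤ))*(i-1) + 5 ≤ m.1 + m.2 := by
        by_contra hcon
        push_neg at hcon
        exact hno (i-1) (by omega) (by linarith) (by linarith)
      have e : (4+2*(k:ℤ))*(i-1) = 4*i + 2*((k:ℤ)*i) - 4 - 2*(k:ℤ) := by ring
      have e2 : (4+2*(k:ℤ))*i = 4*i + 2*((k:ℤ)*i) := by ring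
      have hKi2 : (k:ℤ)*i ≤ 2*(k:ℤ) := by linarith
      have hieq : i = 2 := by
        by_contra hcon
        have h3i : 3 ≤ i := by omega
        have := mul_le_mul_of_nonneg_left h3i (show (0:ℤ) ≤ (k:ℤ) by linarith)
        linarith
      subst hieq
      have hyK : m.2 = (k:ℤ) - 1 := by linarith
      have hxK : m.1 = 10 + (k:ℤ) := by linarith
      have hm1 : m = ((10 + (k:ℤ), (k:ℤ) - 1)) := Prod.ext hxK hyK
      rw [hm1, sub_self]
      exact (mem_char k (by omega) _).mpr (Or.inl rfl)

/-- Maximality of M. -/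
lemma max_lem (hk : 2 ≤ k) (x : ℤ × ℤ)
    (hx1 : x - ((4 + (k:ℤ), (k:ℤ))) ∉ triSemK k)
    (hx2 : x - (((4:ℤ), (0:ℤ))) ∉ triSemK k)
    (hd : x - ((10 + (k:ℤ), (k:ℤ) - 1)) ∈ triSemK k) :
    x = ((10 + (k:ℤ), (k:ℤ) - 1)) := by
  have hK : (2:ℤ) ≤ (k:ℤ) := by exact_mod_cast hk
  rcases (mem_char k (by omega) _).mp hd with h0 | ⟨i, hi, hy, hl, hr⟩
  · exact sub_eq_zero.mp h0
  exfalso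
  rw [snd_sub] at hy
  rw [fst_sub, snd_sub] at hl hr
  simp only [] at hy hl hr
  by_cases hd2 : 1 ≤ x.2 - ((k:ℤ) - 1)
  · -- x - n₁ ∈ 𝔗 with witness i+1, contradiction
    apply hx1
    have e : (4+2*(k:ℤ))*(i+1) = (4+2*(k:ℤ))*i + (4+2*(k:ℤ)) := by ring
    refine mem_of (by omega) _ (i+1) (by omega) ?_ ?_ ?_
    · rw [snd_sub]; simp; linarith
    · rw [fst_sub, snd_sub]; simp; linarith
    · rw [fst_sub, snd_sub]; simp; linarith
  · -- x.2 = k - 1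
    have hx2' : x.2 = (k:ℤ) - 1 := by
      simp at hy
      omega
    apply hx2
    by_cases hedge : x.1 - (10 + (k:ℤ)) + 1 ≤ (4+2*(k:ℤ))*i
    · have e : (4+2*(k:ℤ))*(i+1) = (4+2*(k:ℤ))*i + (4+2*(k:ℤ)) := by ring
      refine mem_of (by omega) _ (i+1) (by omega) ?_ ?_ ?_
      · rw [snd_sub]; simp; linarith
      · rw [fst_sub, snd_sub]; simp; linarith
      · rw [fst_sub, snd_sub]; simp; linarith
    · push_neg at hedge
      have hx1' : x.1 = (4+2*(k:ℤ))*i + 10 + (k:ℤ) := by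
        simp at hy
        linarith
      have e : (4+2*(k:ℤ))*(i+2) = (4+2*(k:ℤ))*i + 8 + 4*(k:ℤ) := by ring
      have e2 : (4+2*(k:ℤ))*i = 4*i + 2*((k:ℤ)*i) := by ring
      have hKi : 2*1 ≤ (k:ℤ)*i := mul_le_mul (by linarith) hi one_pos.le (by linarith)
      refine mem_of (by omega) _ (i+2) (by omega) ?_ ?_ ?_
      · rw [snd_sub]; simp; linarith
      · rw [fst_sub, snd_sub]; simp; linarith
      · rw [fst_sub, snd_sub]; simp; linarith

end Rest
/-- Gorenstein family of Section 5: for the triangle `{(4,0),(4+2k,0),(4+k,k)}`, `k ≥ 2`,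
the element `n₂ = (4,0)` is the smallest element of `𝔗` on the x-axis, and
`Ap(n₁) ∩ Ap(n₂)` (with `n₁ = (4+k,k)`) has `(10+k, k-1)` as its unique maximal element
for the order `a ≤ b ↔ b - a ∈ 𝔗`. -/
theorem stmt13 (k : ℕ) (hk : 2 ≤ k) :
    (((4 : ℤ), (0 : ℤ)) ∈ triSemK k ∧
      ∀ s ∈ triSemK k, s.2 = 0 → s ≠ 0 → (4 : ℤ) ≤ s.1) ∧
    (((10 + (k : ℤ), (k : ℤ) - 1)) ∈ apK k ((4 + (k : ℤ), (k : ℤ))) ∩ apK k ((4 : ℤ), (0 : ℤ)) ∧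
      (∀ x ∈ apK k ((4 + (k : ℤ), (k : ℤ))) ∩ apK k ((4 : ℤ), (0 : ℤ)),
        x - (10 + (k : ℤ), (k : ℤ) - 1) ∈ triSemK k → x = (10 + (k : ℤ), (k : ℤ) - 1)) ∧
      (∀ m ∈ apK k ((4 + (k : ℤ), (k : ℤ))) ∩ apK k ((4 : ℤ), (0 : ℤ)),
        (∀ x ∈ apK k ((4 + (k : ℤ), (k : ℤ))) ∩ apK k ((4 : ℤ), (0 : ℤ)),
          x - m ∈ triSemK k → x = m) → m = (10 + (k : ℤ), (k : ℤ) - 1))) := by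
  have hK : (2:ℤ) ≤ (k:ℤ) := by exact_mod_cast hk
  have hMap : ((10 + (k : ℤ), (k : ℤ) - 1)) ∈
      apK k ((4 + (k : ℤ), (k : ℤ))) ∩ apK k ((4 : ℤ), (0 : ℤ)) :=
    ⟨⟨M_mem hk, M_sub_n1 hk⟩, ⟨M_mem hk, M_sub_n2 hk⟩⟩
  refine ⟨⟨?_, ?_⟩, hMap, ?_, ?_⟩
  · exact mem_of (by omega) _ 1 le_rfl (by norm_num) (by norm_num) (by simp)
  · intro s hs h2 h0
    rcases (mem_char k (by omega) s).mp hs with rfl | ⟨i, hi, hy, hl, hr⟩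
    · exact absurd rfl h0
    · linarith [hl, h2 ▸ hl]
  · intro x hx hd
    exact max_lem hk x hx.1.2 hx.2.2 hd
  · intro m hm hmax
    exact (hmax _ hMap (dom hk m hm.1.1 hm.1.2 hm.2.2)).symm
end
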